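/- arXiv:1407.5866 — 2 statements merged into one kernel-verified Lean document; each statement's English description precedes it below -/
import Mathlib

section
/- Let α ∈ (0,1) and assume the large deviation condition (LD) holds. Then Condition (*) holds automatically: for every δ > 0, lim_{u↓0} limsup_{n→∞} P( max_{1≤j≤k_n} | Σ_{k=1}^{j} ( (S^k_{r_n}/a_n)·1{|S^k_{r_n}|/a_n ≤ u} − E[(S^k_{r_n}/a_n)·1{|S^k_{r_n}|/a_n ≤ u}] ) | > δ ) = 0. -/
open MeasureTheory Filter Set
noncomputable section

def SlowlyVaryingAt (L : ℝ → ℝ) : Prop :=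
  ∀ c : ℝ, 0 < c → Tendsto (fun x => L (c * x) / L x) atTop (nhds 1)

def RegVarOf {Ω : Type*} [MeasurableSpace Ω] (P : Measure Ω) (Y : Ω → ℝ) (α : ℝ) : Prop :=
  ∃ L : ℝ → ℝ, Measurable L ∧ (∀ x : ℝ, 0 < x → 0 < L x) ∧ SlowlyVaryingAt L ∧
    ∀ x : ℝ, 0 < x → (P {ω | x < |Y ω|}).toReal = x ^ (-α) * L x

def IsStationarySeq {Ω : Type*} [MeasurableSpace Ω] (P : Measure Ω) (X : ℕ → Ω → ℝ) : Prop :=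
  ∀ m : ℕ, Measure.map (fun ω => fun i : ℕ => X (i + m) ω) P
    = Measure.map (fun ω => fun i : ℕ => X i ω) P

def pS {Ω : Type*} (X : ℕ → Ω → ℝ) (m : ℕ) (ω : Ω) : ℝ := ∑ i ∈ Finset.range m, X i ω

def blockS {Ω : Type*} (X : ℕ → Ω → ℝ) (r k : ℕ) (ω : Ω) : ℝ :=
  ∑ i ∈ Finset.range r, X ((k - 1) * r + i) ω

def truncBlock {Ω : Type*} (X : ℕ → Ω → ℝ) (a : ℝ) (r : ℕ) (u : ℝ) (k : ℕ) (ω : Ω) : ℝ :=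
  if |blockS X r k ω| / a ≤ u then blockS X r k ω / a else 0

def nuDens (α cp cm : ℝ) (x : ℝ) : ℝ :=
  if 0 < x then cp * α * x ^ (-α - 1)
  else if x < 0 then cm * α * (-x) ^ (-α - 1) else 0

def nuMeasure (α cp cm : ℝ) : Measure ℝ :=
  MeasureTheory.volume.withDensity (fun x => ENNReal.ofReal (nuDens α cp cm x))

def pastSigma {Ω : Type*} (X : ℕ → Ω → ℝ) (j : ℕ) : MeasurableSpace Ω :=
  ⨆ i ∈ Set.Iic j, MeasurableSpace.comap (X i) inferInstance

def futureSigma {Ω : Type*} (X : ℕ → Ω → ℝ) (j : ℕ) : MeasurableSpace Ω :=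
  ⨆ i ∈ Set.Ici j, MeasurableSpace.comap (X i) inferInstance

def alphaDep {Ω : Type*} [MeasurableSpace Ω] (P : Measure Ω) (mA mB : MeasurableSpace Ω) : ℝ :=
  sSup {d : ℝ | ∃ A B : Set Ω, MeasurableSet[mA] A ∧ MeasurableSet[mB] B ∧
    d = |(P (A ∩ B)).toReal - (P A).toReal * (P B).toReal|}

def alphaMix {Ω : Type*} [MeasurableSpace Ω] (P : Measure Ω) (X : ℕ → Ω → ℝ) (m : ℕ) : ℝ :=
  ⨆ j : ℕ, alphaDep P (pastSigma X j) (futureSigma X (j + m))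

def rhoDep {Ω : Type*} [MeasurableSpace Ω] (P : Measure Ω) (mA mB : MeasurableSpace Ω) : ℝ :=
  sSup {d : ℝ | ∃ f g : Ω → ℝ, Measurable[mA] f ∧ Measurable[mB] g ∧
    MemLp f 2 P ∧ MemLp g 2 P ∧
    d = |(∫ ω, f ω * g ω ∂P) - (∫ ω, f ω ∂P) * (∫ ω, g ω ∂P)| /
      Real.sqrt ((∫ ω, (f ω) ^ 2 ∂P) * (∫ ω, (g ω) ^ 2 ∂P))}

def rhoMix {Ω : Type*} [MeasurableSpace Ω] (P : Measure Ω) (X : ℕ → Ω → ℝ) (m : ℕ) : ℝ :=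
  ⨆ j : ℕ, rhoDep P (pastSigma X j) (futureSigma X (j + m))

def CKplus (f : ℝ → ℝ) : Prop :=
  Continuous f ∧ (∀ x, 0 ≤ f x) ∧ (∃ M : ℝ, ∀ x, f x ≤ M) ∧
  (∃ r : ℝ, 0 < r ∧ ∀ x : ℝ, |x| ≤ r → f x = 0) ∧
  (∃ lp : ℝ, Tendsto f atTop (nhds lp)) ∧ (∃ lm : ℝ, Tendsto f atBot (nhds lm))

/-- Condition (*) (Condition 3.1 in the paper): for every δ > 0, the limsup (in n) of
the probability that the maximal partial sum of centered truncated blocks exceeds δ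
tends to 0 as the truncation level u ↓ 0. -/
def CondStar {Ω : Type*} [MeasurableSpace Ω] (P : Measure Ω)
    (X : ℕ → Ω → ℝ) (a : ℕ → ℝ) (r : ℕ → ℕ) : Prop :=
  ∀ δ : ℝ, 0 < δ →
    Tendsto (fun u : ℝ =>
        Filter.limsup (fun n : ℕ =>
          P {ω | ∃ j ∈ Finset.Icc 1 (n / r n), δ <
            |∑ k ∈ Finset.Icc 1 j, (truncBlock X (a n) (r n) u k ω
              - ∫ ω', truncBlock X (a n) (r n) u k ω' ∂P)|}) atTop)
      (nhdsWithin 0 (Set.Ioi 0)) (nhds 0)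


/-!
Markov's inequality bounds the probability in Condition (*) by `2 / δ` times the sum of the
first absolute moments of the truncated blocks; as `min (|·|) v` is subadditive and the sequence
is stationary, this is at most `2 n E[min (|X₀|, u aₙ)] / (δ aₙ)`.

Because `α < 1`, the ratio `P(|X₀| > x) / P(|X₀| > 2x) → 2 ^ α < 2`, so for large `x` the tail
grows by a factor at most `ρ < 2` when `x` is halved. Summing over dyadic levels gives
Karamata's bound `E[min (|X₀|, v)] ≤ C + K v P(|X₀| > v)`, and also `v P(|X₀| > v) → ∞`, whence
`n / aₙ → 0`. Together with `n P(|X₀| > u aₙ) → u ^ (-α)` the limsup is at most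
`2 K u ^ (1 - α) / δ`, which tends to `0` as `u ↓ 0`.
-/

open Topology

lemma min_add_le_add_min {x y v : ℝ} (hx : 0 ≤ x) (hy : 0 ≤ y) (hv : 0 ≤ v) :
    min (x + y) v ≤ min x v + min y v := by
  simp only [min_def]
  split_ifs <;> linarith

lemma min_abs_sum_le_sum_min_abs {ι : Type*} (s : Finset ι) (f : ι → ℝ) {v : ℝ} (hv : 0 ≤ v) :
    min |∑ i ∈ s, f i| v ≤ ∑ i ∈ s, min |f i| v := by
  classical
  induction s using Finset.induction_on with
  | empty => simp [hv]
  | insert i s hi ih =>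
    rw [Finset.sum_insert hi, Finset.sum_insert hi]
    calc min |f i + ∑ j ∈ s, f j| v ≤ min (|f i| + |∑ j ∈ s, f j|) v :=
          min_le_min_right v (abs_add_le _ _)
      _ ≤ min |f i| v + min |∑ j ∈ s, f j| v :=
          min_add_le_add_min (abs_nonneg _) (abs_nonneg _) hv
      _ ≤ min |f i| v + ∑ j ∈ s, min |f j| v := by gcongr

lemma min_le_add_sum_dyadic {v : ℝ} (hv : 0 ≤ v) (y : ℝ) (m : ℕ) :
    min y v ≤ v / 2 ^ m + ∑ i ∈ Finset.range m, if v / 2 ^ (i + 1) < y then v / 2 ^ i else 0 := by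
  induction m with
  | zero => simp
  | succ m ih =>
    rw [Finset.sum_range_succ]
    have hsum : 0 ≤ ∑ i ∈ Finset.range m, if v / 2 ^ (i + 1) < y then v / 2 ^ i else 0 :=
      Finset.sum_nonneg fun i _ => by split_ifs <;> positivity
    split_ifs with h
    · have : 0 ≤ v / 2 ^ (m + 1) := by positivity
      linarith
    · linarith [min_le_left y v, not_lt.1 h]

lemma exists_pow_two_le_div_lt {x₁ v : ℝ} (hx₁ : 0 < x₁) (hv : x₁ ≤ v) :
    ∃ m : ℕ, x₁ ≤ v / 2 ^ m ∧ v / 2 ^ m < 2 * x₁ := by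
  obtain ⟨m, hm₁, hm₂⟩ := exists_nat_pow_near ((one_le_div hx₁).2 hv) one_lt_two
  refine ⟨m, ?_, ?_⟩
  · rw [le_div_iff₀ (by positivity), mul_comm, ← le_div_iff₀ hx₁]
    exact hm₁
  · rw [div_lt_iff₀ (by positivity)]
    have := (div_lt_iff₀ hx₁).1 hm₂
    rw [pow_succ] at this
    linarith

section Doubling

variable {T : ℝ → ℝ} {ρ x₁ : ℝ}

lemma le_pow_mul_of_doubling (hdbl : ∀ x ≥ x₁, T x ≤ ρ * T (2 * x)) (hx₁ : 0 ≤ x₁)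
    (hρ : 0 ≤ ρ) (j : ℕ) {y : ℝ} (hy : x₁ ≤ y) : T y ≤ ρ ^ j * T (2 ^ j * y) := by
  induction j generalizing y with
  | zero => simp
  | succ j ih =>
    calc T y ≤ ρ * T (2 * y) := hdbl y hy
      _ ≤ ρ * (ρ ^ j * T (2 ^ j * (2 * y))) := by gcongr; exact ih (by linarith)
      _ = ρ ^ (j + 1) * T (2 ^ (j + 1) * y) := by ring_nf

/-- With a doubling constant `ρ < 2`, the function `x ↦ x * T x` grows at least like `(2 / ρ) ^ m`
along `x = 2 ^ m * x₁`. -/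
lemma tendsto_mul_atTop_of_doubling (hdbl : ∀ x ≥ x₁, T x ≤ ρ * T (2 * x)) (hx₁ : 0 < x₁)
    (hρ : 0 < ρ) (hρ2 : ρ < 2) (hT : Antitone T) (hT2 : 0 < T (2 * x₁)) :
    Tendsto (fun x => x * T x) atTop atTop := by
  have hgeom : Tendsto (fun m : ℕ => x₁ * T (2 * x₁) * (2 / ρ) ^ m) atTop atTop :=
    (tendsto_pow_atTop_atTop_of_one_lt ((one_lt_div hρ).2 hρ2)).const_mul_atTop (by positivity)
  rw [tendsto_atTop_atTop] at hgeom ⊢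
  intro M
  obtain ⟨j, hj⟩ := hgeom M
  refine ⟨2 ^ j * x₁, fun x hx => ?_⟩
  have hx₁x : x₁ ≤ x := le_trans (le_mul_of_one_le_left hx₁.le (one_le_pow₀ one_le_two)) hx
  obtain ⟨m, hm₁, hm₂⟩ := exists_pow_two_le_div_lt hx₁ hx₁x
  have hjm : j ≤ m := by
    have : (2 : ℝ) ^ j < 2 ^ (m + 1) := by
      rw [div_lt_iff₀ (by positivity)] at hm₂
      nlinarith [pow_succ (2 : ℝ) m]
    exact Nat.lt_succ_iff.1 ((pow_lt_pow_iff_right₀ one_lt_two).1 this)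
  have hy : T (x / 2 ^ m) ≤ ρ ^ m * T x := by
    simpa [mul_div_cancel₀ x (pow_ne_zero m two_ne_zero)] using
      le_pow_mul_of_doubling hdbl hx₁.le hρ.le m hm₁
  calc M ≤ x₁ * T (2 * x₁) * (2 / ρ) ^ m := hj m hjm
    _ ≤ x / 2 ^ m * (ρ ^ m * T x) * (2 / ρ) ^ m := by
        have hx0 : 0 ≤ x / 2 ^ m := hx₁.le.trans hm₁
        gcongr ?_ * _
        exact mul_le_mul hm₁ ((hT hm₂.le).trans hy) hT2.le hx0
    _ = x * T x := by
        rw [div_pow]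
        field_simp

lemma sum_dyadic_le_of_doubling (hdbl : ∀ x ≥ x₁, T x ≤ ρ * T (2 * x)) (hx₁ : 0 ≤ x₁)
    (hρ : 0 ≤ ρ) (hρ2 : ρ < 2) {v : ℝ} (hTv : 0 ≤ T v) {m : ℕ} (hm : x₁ ≤ v / 2 ^ m) :
    ∑ i ∈ Finset.range m, v / 2 ^ i * T (v / 2 ^ (i + 1)) ≤ 2 * ρ / (2 - ρ) * (v * T v) := by
  have hv : 0 ≤ v := by
    have := (le_div_iff₀ (by positivity)).1 hm
    exact (by positivity : 0 ≤ x₁ * 2 ^ m).trans this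
  have hterm : ∀ i ∈ Finset.range m,
      v / 2 ^ i * T (v / 2 ^ (i + 1)) ≤ ρ * (v * T v) * (ρ / 2) ^ i := by
    intro i hi
    have hle : v / 2 ^ m ≤ v / 2 ^ (i + 1) :=
      div_le_div_of_nonneg_left hv (by positivity)
        (pow_le_pow_right₀ one_le_two (Finset.mem_range.1 hi))
    have h := le_pow_mul_of_doubling hdbl hx₁ hρ (i + 1) (hm.trans hle)
    rw [mul_div_cancel₀ _ (pow_ne_zero _ two_ne_zero)] at h
    calc v / 2 ^ i * T (v / 2 ^ (i + 1)) ≤ v / 2 ^ i * (ρ ^ (i + 1) * T v) := by gcongr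
      _ = ρ * (v * T v) * (ρ / 2) ^ i := by
        rw [div_pow]
        field_simp
        ring
  have hgeom : ∑ i ∈ Finset.range m, (ρ / 2) ^ i ≤ 1 / (1 - ρ / 2) := by
    have h := geom_sum_Ico_le_of_lt_one (x := ρ / 2) (m := 0) (n := m) (by positivity) (by linarith)
    rwa [← Finset.range_eq_Ico, pow_zero] at h
  calc ∑ i ∈ Finset.range m, v / 2 ^ i * T (v / 2 ^ (i + 1))
      ≤ ∑ i ∈ Finset.range m, ρ * (v * T v) * (ρ / 2) ^ i := Finset.sum_le_sum hterm
    _ = ρ * (v * T v) * ∑ i ∈ Finset.range m, (ρ / 2) ^ i := (Finset.mul_sum _ _ _).symm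
    _ ≤ ρ * (v * T v) * (1 / (1 - ρ / 2)) := by gcongr
    _ = 2 * ρ / (2 - ρ) * (v * T v) := by
      field_simp

end Doubling

section TruncatedMoment

variable {Ω : Type*} [MeasurableSpace Ω] {P : Measure Ω} {Y : Ω → ℝ}

lemma integrable_min_abs [IsFiniteMeasure P] (hY : Measurable Y) {v : ℝ} (hv : 0 ≤ v) :
    Integrable (fun ω => min |Y ω| v) P :=
  Integrable.of_bound (hY.abs.min measurable_const).aestronglyMeasurable v
    (ae_of_all _ fun ω => by
      rw [Real.norm_of_nonneg (le_min (abs_nonneg _) hv)]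
      exact min_le_right _ _)

lemma integral_min_abs_le_add_sum [IsProbabilityMeasure P] (hY : Measurable Y) {v : ℝ}
    (hv : 0 ≤ v) (m : ℕ) :
    ∫ ω, min |Y ω| v ∂P ≤
      v / 2 ^ m + ∑ i ∈ Finset.range m, v / 2 ^ i * P.real {ω | v / 2 ^ (i + 1) < |Y ω|} := by
  set A : ℕ → Set Ω := fun i => {ω | v / 2 ^ (i + 1) < |Y ω|}
  have hA : ∀ i, MeasurableSet (A i) := fun i => measurableSet_lt measurable_const hY.abs
  have hind : ∀ i, Integrable ((A i).indicator fun _ => v / 2 ^ i) P :=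
    fun i => (integrable_const _).indicator (hA i)
  calc ∫ ω, min |Y ω| v ∂P
      ≤ ∫ ω, (v / 2 ^ m + ∑ i ∈ Finset.range m, (A i).indicator (fun _ => v / 2 ^ i) ω) ∂P := by
        refine integral_mono (integrable_min_abs hY hv)
          ((integrable_const _).add (integrable_finsetSum _ fun i _ => hind i)) fun ω => ?_
        simpa only [A, Set.indicator_apply, Set.mem_ofPred_eq] using
          min_le_add_sum_dyadic hv |Y ω| m
    _ = v / 2 ^ m + ∑ i ∈ Finset.range m, v / 2 ^ i * P.real (A i) := by
        rw [integral_add (integrable_const _) (integrable_finsetSum _ fun i _ => hind i),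
          integral_finsetSum _ fun i _ => hind i]
        simp [integral_indicator_const _ (hA _), mul_comm]

lemma integral_min_abs_le_of_doubling [IsProbabilityMeasure P] (hY : Measurable Y) {ρ x₁ : ℝ}
    (hdbl : ∀ x ≥ x₁, P.real {ω | x < |Y ω|} ≤ ρ * P.real {ω | 2 * x < |Y ω|})
    (hx₁ : 0 < x₁) (hρ : 0 ≤ ρ) (hρ2 : ρ < 2) {v : ℝ} (hv : x₁ ≤ v) :
    ∫ ω, min |Y ω| v ∂P ≤ 2 * x₁ + 2 * ρ / (2 - ρ) * (v * P.real {ω | v < |Y ω|}) := by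
  obtain ⟨m, hm₁, hm₂⟩ := exists_pow_two_le_div_lt hx₁ hv
  exact (integral_min_abs_le_add_sum hY (hx₁.le.trans hv) m).trans
    (add_le_add hm₂.le (sum_dyadic_le_of_doubling (T := fun x => P.real {ω | x < |Y ω|})
      hdbl hx₁.le hρ hρ2 measureReal_nonneg hm₁))

end TruncatedMoment

section RegularVariation

variable {Ω : Type*} [MeasurableSpace Ω] {P : Measure Ω} {Y : Ω → ℝ} {α : ℝ}

lemma antitone_measureReal_lt_abs [IsFiniteMeasure P] :
    Antitone fun x => P.real {ω | x < |Y ω|} :=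
  fun _ _ hst => measureReal_mono fun _ hω => hst.trans_lt hω

namespace RegVarOf

lemma measureReal_pos (h : RegVarOf P Y α) {x : ℝ} (hx : 0 < x) :
    0 < P.real {ω | x < |Y ω|} := by
  obtain ⟨L, -, hL, -, hT⟩ := h
  rw [measureReal_def, hT x hx]
  exact mul_pos (Real.rpow_pos_of_pos hx _) (hL x hx)

lemma tendsto_measureReal_div (h : RegVarOf P Y α) {c : ℝ} (hc : 0 < c) :
    Tendsto (fun x => P.real {ω | c * x < |Y ω|} / P.real {ω | x < |Y ω|}) atTop
      (𝓝 (c ^ (-α))) := by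
  obtain ⟨L, -, hL, hSV, hT⟩ := h
  have hlim : Tendsto (fun x => c ^ (-α) * (L (c * x) / L x)) atTop (𝓝 (c ^ (-α))) := by
    simpa using (hSV c hc).const_mul (c ^ (-α))
  refine hlim.congr' ?_
  filter_upwards [eventually_gt_atTop 0] with x hx
  rw [measureReal_def, measureReal_def, hT x hx, hT _ (mul_pos hc hx),
    Real.mul_rpow hc.le hx.le]
  have := (hL x hx).ne'
  have := (Real.rpow_pos_of_pos hx (-α)).ne'
  field_simp

lemma exists_doubling (h : RegVarOf P Y α) (hα : α < 1) :
    ∃ x₁ ρ : ℝ, 0 < x₁ ∧ 0 < ρ ∧ ρ < 2 ∧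
      ∀ x ≥ x₁, P.real {ω | x < |Y ω|} ≤ ρ * P.real {ω | 2 * x < |Y ω|} := by
  have hlim : Tendsto (fun x => P.real {ω | x < |Y ω|} / P.real {ω | 2 * x < |Y ω|}) atTop
      (𝓝 (2 ^ α)) := by
    have := (h.tendsto_measureReal_div two_pos).inv₀ (Real.rpow_pos_of_pos two_pos _).ne'
    simpa [Real.rpow_neg zero_le_two] using this
  have h2α : (2 : ℝ) ^ α < 2 := by
    simpa using Real.rpow_lt_rpow_of_exponent_lt one_lt_two hα
  obtain ⟨ρ, hαρ, hρ2⟩ := exists_between h2α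
  obtain ⟨x₀, hx₀⟩ := eventually_atTop.1 (hlim.eventually_lt_const hαρ)
  refine ⟨max x₀ 1, ρ, by positivity, (Real.rpow_pos_of_pos two_pos _).trans hαρ, hρ2,
    fun x hx => ?_⟩
  have hx0 : 0 < x := zero_lt_one.trans_le ((le_max_right _ _).trans hx)
  have := hx₀ x ((le_max_left _ _).trans hx)
  rw [div_lt_iff₀ (h.measureReal_pos (by positivity))] at this
  exact this.le

lemma tendsto_mul_measureReal_atTop [IsFiniteMeasure P] (h : RegVarOf P Y α) (hα : α < 1) :
    Tendsto (fun x => x * P.real {ω | x < |Y ω|}) atTop atTop := by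
  obtain ⟨x₁, ρ, hx₁, hρ, hρ2, hdbl⟩ := h.exists_doubling hα
  exact tendsto_mul_atTop_of_doubling hdbl hx₁ hρ hρ2 antitone_measureReal_lt_abs
    (h.measureReal_pos (by positivity))

lemma exists_integral_min_abs_le [IsProbabilityMeasure P] (h : RegVarOf P Y α) (hα : α < 1)
    (hY : Measurable Y) :
    ∃ C K : ℝ, ∀ᶠ v in atTop, ∫ ω, min |Y ω| v ∂P ≤ C + K * (v * P.real {ω | v < |Y ω|}) := by
  obtain ⟨x₁, ρ, hx₁, hρ, hρ2, hdbl⟩ := h.exists_doubling hα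
  exact ⟨_, _, eventually_atTop.2
    ⟨x₁, fun v hv => integral_min_abs_le_of_doubling hY hdbl hx₁ hρ.le hρ2 hv⟩⟩

variable [IsFiniteMeasure P] {a : ℕ → ℝ}

lemma tendsto_atTop_of_tendsto_mul (h : RegVarOf P Y α)
    (ha : Tendsto (fun n : ℕ => (n : ℝ) * P.real {ω | a n < |Y ω|}) atTop (𝓝 1)) :
    Tendsto a atTop atTop := by
  have htail : Tendsto (fun n : ℕ => P.real {ω | a n < |Y ω|}) atTop (𝓝 0) := by
    have := ha.mul tendsto_one_div_atTop_nhds_zero_nat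
    rw [mul_zero] at this
    refine this.congr' ?_
    filter_upwards [eventually_ne_atTop 0] with n hn
    field_simp
  refine tendsto_atTop_atTop.2 fun M => ?_
  obtain ⟨N, hN⟩ := eventually_atTop.1
    (htail.eventually_lt_const (h.measureReal_pos (lt_max_of_lt_right zero_lt_one : (0 : ℝ) < max M 1)))
  exact ⟨N, fun n hn => (le_max_left M 1).trans
    (antitone_measureReal_lt_abs.reflect_lt (hN n hn)).le⟩

lemma tendsto_mul_measureReal_const_mul (h : RegVarOf P Y α)
    (ha : Tendsto (fun n : ℕ => (n : ℝ) * P.real {ω | a n < |Y ω|}) atTop (𝓝 1))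
    {c : ℝ} (hc : 0 < c) :
    Tendsto (fun n : ℕ => (n : ℝ) * P.real {ω | c * a n < |Y ω|}) atTop (𝓝 (c ^ (-α))) := by
  have ha_top := h.tendsto_atTop_of_tendsto_mul ha
  have := ha.mul ((h.tendsto_measureReal_div hc).comp ha_top)
  rw [one_mul] at this
  refine this.congr' ?_
  filter_upwards [ha_top.eventually_gt_atTop 0] with n hn
  have := (h.measureReal_pos hn).ne'
  simp only [Function.comp_apply]
  field_simp

lemma tendsto_div_of_tendsto_mul (h : RegVarOf P Y α) (hα : α < 1)
    (ha : Tendsto (fun n : ℕ => (n : ℝ) * P.real {ω | a n < |Y ω|}) atTop (𝓝 1)) :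
    Tendsto (fun n : ℕ => (n : ℝ) / a n) atTop (𝓝 0) := by
  have ha_top := h.tendsto_atTop_of_tendsto_mul ha
  have := ha.mul ((h.tendsto_mul_measureReal_atTop hα).comp ha_top).inv_tendsto_atTop
  rw [mul_zero] at this
  refine this.congr' ?_
  filter_upwards [ha_top.eventually_gt_atTop 0] with n hn
  have := (h.measureReal_pos hn).ne'
  simp only [Function.comp_apply, Pi.inv_apply]
  field_simp

end RegVarOf

end RegularVariation

lemma abs_truncBlock_le_min {Ω : Type*} {X : ℕ → Ω → ℝ} {a u : ℝ} {r k : ℕ} (ha : 0 < a) (hu : 0 ≤ u) (ω : Ω) :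
    |truncBlock X a r u k ω| ≤ min |blockS X r k ω| (u * a) / a := by
  unfold truncBlock
  split_ifs with h
  · rw [abs_div, abs_of_pos ha, min_eq_left ((div_le_iff₀ ha).1 h)]
  · rw [abs_zero]
    positivity

section Blocks

variable {Ω : Type*} [MeasurableSpace Ω] {P : Measure Ω} {X : ℕ → Ω → ℝ} {a u : ℝ} {r k : ℕ}

lemma IsStationarySeq.identDistrib (hstat : IsStationarySeq P X) (hX : ∀ i, Measurable (X i))
    (i : ℕ) : ProbabilityTheory.IdentDistrib (X i) (X 0) P P := by
  refine ⟨(hX i).aemeasurable, (hX 0).aemeasurable, ?_⟩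
  have hshift : Measurable fun ω j => X (j + i) ω := measurable_pi_lambda _ fun j => hX _
  have hseq : Measurable fun ω j => X j ω := measurable_pi_lambda _ fun j => hX _
  have h := congrArg (Measure.map fun f : ℕ → ℝ => f 0) (hstat i)
  rw [Measure.map_map (measurable_pi_apply 0) hshift,
    Measure.map_map (measurable_pi_apply 0) hseq] at h
  simpa [Function.comp_def] using h

lemma measurable_truncBlock (hX : ∀ i, Measurable (X i)) :
    Measurable (truncBlock X a r u k) := by
  have hS : Measurable (blockS X r k) := Finset.measurable_sum _ fun i _ => hX _
  exact Measurable.ite (measurableSet_le (hS.abs.div_const _) measurable_const)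
    (hS.div_const _) measurable_const

lemma integrable_truncBlock [IsFiniteMeasure P] (hX : ∀ i, Measurable (X i)) (ha : 0 < a)
    (hu : 0 ≤ u) : Integrable (truncBlock X a r u k) P :=
  Integrable.of_bound (measurable_truncBlock hX).aestronglyMeasurable u
    (ae_of_all _ fun ω => (abs_truncBlock_le_min ha hu ω).trans
      ((div_le_iff₀ ha).2 (min_le_right _ _)))

lemma integral_abs_truncBlock_le [IsProbabilityMeasure P] (hX : ∀ i, Measurable (X i))
    (hstat : IsStationarySeq P X) (ha : 0 < a) (hu : 0 ≤ u) :
    ∫ ω, |truncBlock X a r u k ω| ∂P ≤ r * (∫ ω, min |X 0 ω| (u * a) ∂P) / a := by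
  have hua : 0 ≤ u * a := mul_nonneg hu ha.le
  have hmin : ∀ i, Integrable (fun ω => min |X ((k - 1) * r + i) ω| (u * a)) P :=
    fun i => integrable_min_abs (hX _) hua
  calc ∫ ω, |truncBlock X a r u k ω| ∂P
      ≤ ∫ ω, (∑ i ∈ Finset.range r, min |X ((k - 1) * r + i) ω| (u * a)) / a ∂P :=
        integral_mono (integrable_truncBlock hX ha hu).abs
          ((integrable_finsetSum _ fun i _ => hmin i).div_const a) fun ω =>
          (abs_truncBlock_le_min ha hu ω).trans
            (div_le_div_of_nonneg_right (min_abs_sum_le_sum_min_abs _ _ hua) ha.le)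
    _ = r * (∫ ω, min |X 0 ω| (u * a) ∂P) / a := by
        have hcomp : Measurable fun x : ℝ => min |x| (u * a) :=
          measurable_id.abs.min measurable_const
        have hident : ∀ i, ∫ ω, min |X i ω| (u * a) ∂P = ∫ ω, min |X 0 ω| (u * a) ∂P :=
          fun i => ((hstat.identDistrib hX i).comp hcomp).integral_eq
        rw [integral_div, integral_finsetSum _ fun i _ => hmin i]
        simp only [hident, Finset.sum_const, Finset.card_range, nsmul_eq_mul]

end Blocks

section MaximalInequality

variable {Ω : Type*} [MeasurableSpace Ω] {P : Measure Ω} [IsProbabilityMeasure P]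

lemma integral_abs_sub_integral_le {f : Ω → ℝ} (hf : Integrable f P) :
    ∫ ω, |f ω - ∫ ω', f ω' ∂P| ∂P ≤ 2 * ∫ ω, |f ω| ∂P :=
  calc ∫ ω, |f ω - ∫ ω', f ω' ∂P| ∂P ≤ ∫ ω, (|f ω| + |∫ ω', f ω' ∂P|) ∂P :=
        integral_mono (hf.sub (integrable_const _)).abs (hf.abs.add (integrable_const _))
          fun ω => abs_sub _ _
    _ = ∫ ω, |f ω| ∂P + |∫ ω', f ω' ∂P| := by
        rw [integral_add hf.abs (integrable_const _), integral_const, probReal_univ, one_smul]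
    _ ≤ 2 * ∫ ω, |f ω| ∂P := by linarith [abs_integral_le_integral_abs (f := f) (μ := P)]

lemma measure_exists_abs_sum_sub_integral_gt_le {Y : ℕ → Ω → ℝ} (hY : ∀ k, Integrable (Y k) P)
    (N : ℕ) {δ : ℝ} (hδ : 0 < δ) :
    P {ω | ∃ j ∈ Finset.Icc 1 N, δ < |∑ k ∈ Finset.Icc 1 j, (Y k ω - ∫ ω', Y k ω' ∂P)|} ≤
      ENNReal.ofReal ((2 * ∑ k ∈ Finset.Icc 1 N, ∫ ω, |Y k ω| ∂P) / δ) := by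
  set Z : Ω → ℝ := fun ω => ∑ k ∈ Finset.Icc 1 N, |Y k ω - ∫ ω', Y k ω' ∂P|
  have hint : ∀ k, Integrable (fun ω => |Y k ω - ∫ ω', Y k ω' ∂P|) P :=
    fun k => ((hY k).sub (integrable_const _)).abs
  have hZ : Integrable Z P := integrable_finsetSum _ fun k _ => hint k
  have hsub : {ω | ∃ j ∈ Finset.Icc 1 N, δ < |∑ k ∈ Finset.Icc 1 j, (Y k ω - ∫ ω', Y k ω' ∂P)|}
      ⊆ {ω | δ ≤ Z ω} := by
    rintro ω ⟨j, hj, hδj⟩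
    refine hδj.le.trans ((Finset.abs_sum_le_sum_abs _ _).trans ?_)
    exact Finset.sum_le_sum_of_subset_of_nonneg
      (Finset.Icc_subset_Icc le_rfl (Finset.mem_Icc.1 hj).2) fun k _ _ => abs_nonneg _
  have hEZ : ∫ ω, Z ω ∂P ≤ 2 * ∑ k ∈ Finset.Icc 1 N, ∫ ω, |Y k ω| ∂P := by
    rw [integral_finsetSum _ fun k _ => hint k, Finset.mul_sum]
    exact Finset.sum_le_sum fun k _ => integral_abs_sub_integral_le (hY k)
  have hmarkov : δ * P.real {ω | δ ≤ Z ω} ≤ ∫ ω, Z ω ∂P :=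
    mul_meas_ge_le_integral_of_nonneg (ae_of_all _ fun ω => Finset.sum_nonneg fun k _ =>
      abs_nonneg _) hZ δ
  calc _ ≤ P {ω | δ ≤ Z ω} := measure_mono hsub
    _ = ENNReal.ofReal (P.real {ω | δ ≤ Z ω}) := (ofReal_measureReal).symm
    _ ≤ _ := by
        refine ENNReal.ofReal_le_ofReal ((le_div_iff₀ hδ).2 ?_)
        linarith

end MaximalInequality

lemma measure_exists_abs_sum_truncBlock_gt_le {Ω : Type*} [MeasurableSpace Ω] {P : Measure Ω}
    [IsProbabilityMeasure P] {X : ℕ → Ω → ℝ} (hX : ∀ i, Measurable (X i))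
    (hstat : IsStationarySeq P X) {a u δ : ℝ} (ha : 0 < a) (hu : 0 ≤ u) (hδ : 0 < δ) (n r : ℕ) :
    P {ω | ∃ j ∈ Finset.Icc 1 (n / r), δ < |∑ k ∈ Finset.Icc 1 j,
        (truncBlock X a r u k ω - ∫ ω', truncBlock X a r u k ω' ∂P)|} ≤
      ENNReal.ofReal (2 * (n * (∫ ω, min |X 0 ω| (u * a) ∂P) / a) / δ) := by
  refine (measure_exists_abs_sum_sub_integral_gt_le
    (fun k => integrable_truncBlock hX ha hu) _ hδ).trans (ENNReal.ofReal_le_ofReal ?_)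
  have hM : 0 ≤ ∫ ω, min |X 0 ω| (u * a) ∂P :=
    integral_nonneg fun ω => le_min (abs_nonneg _) (mul_nonneg hu ha.le)
  have hnr : ((n / r : ℕ) : ℝ) * r ≤ n := by exact_mod_cast Nat.div_mul_le_self n r
  gcongr
  calc ∑ k ∈ Finset.Icc 1 (n / r), ∫ ω, |truncBlock X a r u k ω| ∂P
      ≤ ∑ k ∈ Finset.Icc 1 (n / r), r * (∫ ω, min |X 0 ω| (u * a) ∂P) / a :=
        Finset.sum_le_sum fun k _ => integral_abs_truncBlock_le hX hstat ha hu
    _ = ((n / r : ℕ) : ℝ) * r * (∫ ω, min |X 0 ω| (u * a) ∂P) / a := by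
        simp [mul_div_assoc, mul_assoc]
    _ ≤ n * (∫ ω, min |X 0 ω| (u * a) ∂P) / a := by gcongr

lemma tendsto_ofReal_mul_rpow_nhdsGT_zero (c : ℝ) {β : ℝ} (hβ : 0 < β) :
    Tendsto (fun u : ℝ => ENNReal.ofReal (c * u ^ β)) (𝓝[>] 0) (𝓝 0) := by
  have hpow : Tendsto (fun u : ℝ => u ^ β) (𝓝[>] 0) (𝓝 0) := by
    simpa [Real.zero_rpow hβ.ne'] using
      (Real.continuousAt_rpow_const 0 β (Or.inr hβ.le)).tendsto.mono_left nhdsWithin_le_nhds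
  simpa using ENNReal.tendsto_ofReal (hpow.const_mul c)

theorem stmt4_general
    {Ω : Type*} [MeasurableSpace Ω] (P : Measure Ω) [IsProbabilityMeasure P]
    (X : ℕ → Ω → ℝ) (hXmeas : ∀ i, Measurable (X i))
    (hstat : IsStationarySeq P X)
    (α : ℝ) (hα1 : α < 1)
    (hreg : RegVarOf P (X 0) α)
    (a : ℕ → ℝ)
    (hna : Tendsto (fun n : ℕ => (n : ℝ) * (P {ω | a n < |X 0 ω|}).toReal) atTop (nhds 1))
    (r : ℕ → ℕ) :
    CondStar P X a r := by
  intro δ hδ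
  obtain ⟨C, K, hmoment⟩ := hreg.exists_integral_min_abs_le hα1 (hXmeas 0)
  have ha_top := hreg.tendsto_atTop_of_tendsto_mul hna
  refine tendsto_of_tendsto_of_tendsto_of_le_of_le' tendsto_const_nhds
    (tendsto_ofReal_mul_rpow_nhdsGT_zero (2 * K / δ) (sub_pos.2 hα1))
    (Eventually.of_forall fun _ => bot_le) ?_
  filter_upwards [self_mem_nhdsWithin] with u (hu : 0 < u)
  have hbound : Tendsto (fun n : ℕ => 2 * (C * (n / a n) +
      K * u * (n * P.real {ω | u * a n < |X 0 ω|})) / δ) atTop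
      (𝓝 (2 * K / δ * u ^ (1 - α))) := by
    convert ((((hreg.tendsto_div_of_tendsto_mul hα1 hna).const_mul C).add
      ((hreg.tendsto_mul_measureReal_const_mul hna hu).const_mul (K * u))).const_mul 2).div_const δ
      using 2
    rw [Real.rpow_sub hu, Real.rpow_one, Real.rpow_neg hu.le]
    ring
  refine (limsup_le_limsup ?_).trans (ENNReal.tendsto_ofReal hbound).limsup_eq.le
  filter_upwards [(ha_top.const_mul_atTop hu).eventually hmoment, ha_top.eventually_gt_atTop 0]
    with n hmoment_n ha_n
  refine (measure_exists_abs_sum_truncBlock_gt_le hXmeas hstat ha_n hu.le hδ n (r n)).trans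
    (ENNReal.ofReal_le_ofReal ?_)
  gcongr
  calc n * (∫ ω, min |X 0 ω| (u * a n) ∂P) / a n
      ≤ n * (C + K * (u * a n * P.real {ω | u * a n < |X 0 ω|})) / a n := by gcongr
    _ = C * (n / a n) + K * u * (n * P.real {ω | u * a n < |X 0 ω|}) := by
        field_simp

/-- For α ∈ (0,1), the large deviation condition (LD) implies that
Condition (*) holds automatically. -/
theorem stmt4
    {Ω : Type*} [MeasurableSpace Ω] (P : Measure Ω) [IsProbabilityMeasure P]
    (X : ℕ → Ω → ℝ) (hXmeas : ∀ i, Measurable (X i))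
    (hstat : IsStationarySeq P X)
    (α : ℝ) (hα0 : 0 < α) (hα1 : α < 1)
    (hreg : RegVarOf P (X 0) α)
    (a : ℕ → ℝ) (hapos : ∀ n, 0 < a n)
    (hna : Tendsto (fun n : ℕ => (n : ℝ) * (P {ω | a n < |X 0 ω|}).toReal) atTop (nhds 1))
    (r : ℕ → ℕ) (hrpos : ∀ n, 1 ≤ r n)
    (hrinf : Tendsto r atTop atTop)
    (hrn : Tendsto (fun n : ℕ => (r n : ℝ) / (n : ℝ)) atTop (nhds 0))
    (cp cm : ℝ) (hcp : 0 ≤ cp) (hcm : 0 ≤ cm)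
    (hLD : ∀ x : ℝ, 0 < x →
      Tendsto (fun n : ℕ => ((n / r n : ℕ) : ℝ) *
        (P {ω | x * a n < pS X (r n) ω}).toReal) atTop (nhds (cp * x ^ (-α))) ∧
      Tendsto (fun n : ℕ => ((n / r n : ℕ) : ℝ) *
        (P {ω | pS X (r n) ω < -(x * a n)}).toReal) atTop (nhds (cm * x ^ (-α)))) :
    CondStar P X a r :=
  stmt4_general P X hXmeas hstat α hα1 hreg a hna r
end
end

section
/- Let (X_n) be a strictly stationary sequence with α-mixing coefficients (α_m), let n, r_n, k_n be positive integers and l_n < r_n, set S^k_{r_n} = X_{(k−1)r_n+1}+⋯+X_{k r_n} and S^k_{r_n,l_n} = X_{k r_n − l_n + 1}+⋯+X_{k r_n}, and let a_n > 0 and f : ℝ → [0,∞) be a bounded measurable function. Then | E[ exp( − Σ_{k=1}^{k_n} f( a_n^{−1}(S^k_{r_n} − S^k_{r_n,l_n}) ) ) ] − ( E[ exp( − f( a_n^{−1} S_{r_n − l_n} ) ) ] )^{k_n} | ≤ 4 k_n α_{l_n + 1}. -/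
/-!
Write `W k = exp (-f (a⁻¹ (S^k_r - S^k_{r,l})))`, a `[0, 1]`-valued function of the first
`r - l` variables of the `k`-th block. The product `W 1 ⋯ W k` is measurable with respect to the
variables of index `< k r - l`, and `W (k + 1)` with respect to those of index `≥ k r`, a gap of
`l + 1`; by stationarity every `W k` has mean `c = E exp (-f (a⁻¹ S_{r-l}))`. For `[0, 1]`-valued
`g` and `h` the covariance inequality `|E g h - E g E h| ≤ α` follows from its version for
indicators by writing `g = ∫₀¹ 1{s < g} ds` (and likewise `h`) and applying Fubini. Hence
`|E (W 1 ⋯ W (k+1)) - c E (W 1 ⋯ W k)| ≤ α_{l+1}`, and since `|c| ≤ 1` these errors telescope to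
`(K - 1) α_{l+1}`.
-/
open MeasureTheory Filter Set
noncomputable section

/-- The sum of the last l variables of the k-th block of length r:
S^k_{r,l} = X_{kr−l+1} + ⋯ + X_{kr} (in 0-indexed form). -/
def blockTail {Ω : Type*} (X : ℕ → Ω → ℝ) (r l k : ℕ) (ω : Ω) : ℝ :=
  ∑ i ∈ Finset.range l, X (k * r - l + i) ω


section Covariance

variable {Ω : Type*} {mA mB mΩ : MeasurableSpace Ω} {P : Measure Ω}

lemma integral_Ioo_indicator_Iio {c : ℝ} (h0 : 0 ≤ c) (h1 : c ≤ 1) :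
    ∫ s in Ioo (0 : ℝ) 1, (Iio c).indicator 1 s = c := by
  rw [integral_indicator_one measurableSet_Iio, measureReal_restrict_apply measurableSet_Iio,
    Iio_inter_Ioo, min_eq_left h1, Real.volume_real_Ioo_of_le h0, sub_zero]

section Finite

variable [IsFiniteMeasure P]

lemma integral_mul_sub_eq_integral_level_sets {g h : Ω → ℝ} (hg : Measurable g)
    (hg0 : ∀ ω, 0 ≤ g ω) (hg1 : ∀ ω, g ω ≤ 1) (hh : Measurable h) {C : ℝ}
    (hC : ∀ ω, |h ω| ≤ C) :
    ∫ ω, g ω * h ω ∂P - (∫ ω, g ω ∂P) * ∫ ω, h ω ∂P =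
      ∫ s in Ioo (0 : ℝ) 1, (∫ ω, {ω | s < g ω}.indicator 1 ω * h ω ∂P
        - P.real {ω | s < g ω} * ∫ ω, h ω ∂P) := by
  let F : Ω → ℝ → ℝ := fun ω s => {ω | s < g ω}.indicator 1 ω
  have hF : Measurable (Function.uncurry F) :=
    measurable_const.indicator (measurableSet_lt measurable_snd (hg.comp measurable_fst))
  have hF01 : ∀ ω s, |F ω s| ≤ 1 := fun ω s => by
    by_cases hs : s < g ω <;> simp [F, indicator_apply, hs]
  have hgF : ∀ ω, g ω = ∫ s in Ioo (0 : ℝ) 1, F ω s := fun ω => by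
    rw [← integral_Ioo_indicator_Iio (hg0 ω) (hg1 ω)]
    congr 1 with s
  have hint₁ : Integrable (Function.uncurry F) (P.prod (volume.restrict (Ioo (0 : ℝ) 1))) :=
    .of_bound hF.aestronglyMeasurable 1 (.of_forall fun p => hF01 p.1 p.2)
  have hint₂ : Integrable (Function.uncurry fun ω s => F ω s * h ω)
      (P.prod (volume.restrict (Ioo (0 : ℝ) 1))) :=
    .of_bound (hF.mul (hh.comp measurable_fst)).aestronglyMeasurable C
      (.of_forall fun ⟨ω, s⟩ => by
        simpa [abs_mul] using mul_le_mul (hF01 ω s) (hC ω) (abs_nonneg _) zero_le_one)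
  have hprod : ∫ ω, g ω * h ω ∂P = ∫ s in Ioo (0 : ℝ) 1, ∫ ω, F ω s * h ω ∂P := by
    simp_rw [hgF, ← integral_mul_const]
    exact integral_integral_swap hint₂
  have hmean : ∫ ω, g ω ∂P = ∫ s in Ioo (0 : ℝ) 1, P.real {ω | s < g ω} := by
    simp_rw [← integral_indicator_one (measurableSet_lt measurable_const hg)]
    rw [integral_congr_ae (.of_forall hgF)]
    exact integral_integral_swap hint₁
  have hprod_int : Integrable (fun s => ∫ ω, F ω s * h ω ∂P) (volume.restrict (Ioo (0 : ℝ) 1)) :=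
    hint₂.integral_prod_right
  have hmean_int : Integrable (fun s => P.real {ω | s < g ω}) (volume.restrict (Ioo (0 : ℝ) 1)) :=
    hint₁.integral_prod_right.congr
      (.of_forall fun s => integral_indicator_one (measurableSet_lt measurable_const hg))
  rw [hprod, hmean, ← integral_mul_const, ← integral_sub hprod_int (hmean_int.mul_const _)]

lemma abs_integral_mul_sub_le_of_level_sets {g h : Ω → ℝ} (hg : Measurable g)
    (hg0 : ∀ ω, 0 ≤ g ω) (hg1 : ∀ ω, g ω ≤ 1) (hh : Measurable h) {C : ℝ}
    (hC : ∀ ω, |h ω| ≤ C) {ε : ℝ}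
    (hε : ∀ s, |∫ ω, {ω | s < g ω}.indicator 1 ω * h ω ∂P
      - P.real {ω | s < g ω} * ∫ ω, h ω ∂P| ≤ ε) :
    |∫ ω, g ω * h ω ∂P - (∫ ω, g ω ∂P) * ∫ ω, h ω ∂P| ≤ ε := by
  rw [integral_mul_sub_eq_integral_level_sets hg hg0 hg1 hh hC]
  simpa using norm_integral_le_of_norm_le_const (μ := volume.restrict (Ioo (0 : ℝ) 1))
    (.of_forall fun s => (Real.norm_eq_abs _).trans_le (hε s))

end Finite

variable [IsProbabilityMeasure P]

lemma abs_measureReal_inter_sub_mul_le_one (A B : Set Ω) :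
    |P.real (A ∩ B) - P.real A * P.real B| ≤ 1 :=
  abs_sub_le_of_nonneg_of_le measureReal_nonneg measureReal_le_one
    (mul_nonneg measureReal_nonneg measureReal_nonneg)
    (mul_le_one₀ measureReal_le_one measureReal_nonneg measureReal_le_one)

lemma abs_measureReal_inter_sub_mul_le_alphaDep {A B : Set Ω} (hA : MeasurableSet[mA] A)
    (hB : MeasurableSet[mB] B) :
    |P.real (A ∩ B) - P.real A * P.real B| ≤ alphaDep P mA mB :=
  le_csSup ⟨1, by rintro _ ⟨A, B, -, -, rfl⟩; exact abs_measureReal_inter_sub_mul_le_one A B⟩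
    ⟨A, B, hA, hB, rfl⟩

lemma alphaDep_nonneg : 0 ≤ alphaDep P mA mB :=
  (abs_nonneg _).trans (abs_measureReal_inter_sub_mul_le_alphaDep (P := P)
    (@MeasurableSet.empty _ mA) (@MeasurableSet.empty _ mB))

lemma alphaDep_le_one : alphaDep P mA mB ≤ 1 :=
  csSup_le ⟨_, ∅, ∅, @MeasurableSet.empty _ mA, @MeasurableSet.empty _ mB, rfl⟩
    (by rintro _ ⟨A, B, -, -, rfl⟩; exact abs_measureReal_inter_sub_mul_le_one A B)

lemma abs_integral_indicator_mul_sub_le_alphaDep (hmA : mA ≤ mΩ) (hmB : mB ≤ mΩ)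
    {A : Set Ω} (hA : MeasurableSet[mA] A) {h : Ω → ℝ} (hh : Measurable[mB] h)
    (hh0 : ∀ ω, 0 ≤ h ω) (hh1 : ∀ ω, h ω ≤ 1) :
    |∫ ω, A.indicator 1 ω * h ω ∂P - P.real A * ∫ ω, h ω ∂P| ≤ alphaDep P mA mB := by
  have hA' : MeasurableSet A := hmA _ hA
  have hswapped := abs_integral_mul_sub_le_of_level_sets (P := P) (hh.mono hmB le_rfl) hh0 hh1
    (measurable_one.indicator hA' : Measurable (A.indicator (1 : Ω → ℝ))) (C := 1)
    (fun ω => by by_cases hω : ω ∈ A <;> simp [hω])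
    (ε := alphaDep P mA mB) fun t => by
      have hB : MeasurableSet[mB] {ω | t < h ω} := hh measurableSet_Ioi
      have hBA : ∀ ω, {ω | t < h ω}.indicator 1 ω * A.indicator 1 ω
          = ({ω | t < h ω} ∩ A).indicator (1 : Ω → ℝ) ω := fun ω => by
        rw [inter_indicator_one, Pi.mul_apply]
      simp_rw [hBA]
      rw [integral_indicator_one ((hmB _ hB).inter hA'), integral_indicator_one hA', inter_comm,
        mul_comm (P.real _)]
      exact abs_measureReal_inter_sub_mul_le_alphaDep hA hB
  simp_rw [integral_indicator_one hA', mul_comm (h _), mul_comm (∫ ω, h ω ∂P)] at hswapped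
  exact hswapped

theorem abs_integral_mul_sub_le_alphaDep (hmA : mA ≤ mΩ) (hmB : mB ≤ mΩ) {g h : Ω → ℝ}
    (hg : Measurable[mA] g) (hh : Measurable[mB] h) (hg0 : ∀ ω, 0 ≤ g ω) (hg1 : ∀ ω, g ω ≤ 1)
    (hh0 : ∀ ω, 0 ≤ h ω) (hh1 : ∀ ω, h ω ≤ 1) :
    |∫ ω, g ω * h ω ∂P - (∫ ω, g ω ∂P) * ∫ ω, h ω ∂P| ≤ alphaDep P mA mB :=
  abs_integral_mul_sub_le_of_level_sets (hg.mono hmA le_rfl) hg0 hg1 (hh.mono hmB le_rfl)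
    (fun ω => (abs_of_nonneg (hh0 ω)).trans_le (hh1 ω)) fun _ =>
    abs_integral_indicator_mul_sub_le_alphaDep hmA hmB (hg measurableSet_Ioi) hh hh0 hh1

end Covariance

section Mixing

variable {Ω : Type*} {X : ℕ → Ω → ℝ}

lemma measurable_pastSigma {i j : ℕ} (hij : i ≤ j) : Measurable[pastSigma X j] (X i) :=
  Measurable.of_comap_le <|
    le_biSup (fun i => MeasurableSpace.comap (X i) _) (show i ∈ Iic j from hij)

lemma measurable_futureSigma {i j : ℕ} (hji : j ≤ i) : Measurable[futureSigma X j] (X i) :=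
  Measurable.of_comap_le <|
    le_biSup (fun i => MeasurableSpace.comap (X i) _) (show i ∈ Ici j from hji)

variable [MeasurableSpace Ω]

lemma pastSigma_le (hX : ∀ i, Measurable (X i)) (j : ℕ) : pastSigma X j ≤ ‹_› :=
  iSup₂_le fun i _ => (hX i).comap_le

lemma futureSigma_le (hX : ∀ i, Measurable (X i)) (j : ℕ) : futureSigma X j ≤ ‹_› :=
  iSup₂_le fun i _ => (hX i).comap_le

variable {P : Measure Ω}

lemma IsStationarySeq.integral_comp_shift (hstat : IsStationarySeq P X)
    (hX : ∀ i, Measurable (X i)) {Φ : (ℕ → ℝ) → ℝ} (hΦ : Measurable Φ) (m : ℕ) :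
    ∫ ω, Φ (fun i => X (i + m) ω) ∂P = ∫ ω, Φ (fun i => X i ω) ∂P := by
  rw [← integral_map (measurable_pi_lambda _ fun i => hX (i + m)).aemeasurable
      hΦ.aestronglyMeasurable, hstat m,
    integral_map (measurable_pi_lambda _ hX).aemeasurable hΦ.aestronglyMeasurable]

variable [IsProbabilityMeasure P]

lemma alphaMix_nonneg (n : ℕ) : 0 ≤ alphaMix P X n :=
  Real.iSup_nonneg fun _ => alphaDep_nonneg

theorem abs_integral_mul_sub_le_alphaMix (hX : ∀ i, Measurable (X i)) {g h : Ω → ℝ} {j n : ℕ}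
    (hg : Measurable[pastSigma X j] g) (hh : Measurable[futureSigma X (j + n)] h)
    (hg0 : ∀ ω, 0 ≤ g ω) (hg1 : ∀ ω, g ω ≤ 1) (hh0 : ∀ ω, 0 ≤ h ω) (hh1 : ∀ ω, h ω ≤ 1) :
    |∫ ω, g ω * h ω ∂P - (∫ ω, g ω ∂P) * ∫ ω, h ω ∂P| ≤ alphaMix P X n :=
  (abs_integral_mul_sub_le_alphaDep (pastSigma_le hX j) (futureSigma_le hX (j + n)) hg hh
    hg0 hg1 hh0 hh1).trans <|
    le_ciSup (f := fun j => alphaDep P (pastSigma X j) (futureSigma X (j + n)))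
      ⟨1, by rintro _ ⟨j, rfl⟩; exact alphaDep_le_one⟩ j

end Mixing

theorem abs_integral_prod_range_sub_pow_le {Ω : Type*} [MeasurableSpace Ω] {P : Measure Ω}
    {Y : ℕ → Ω → ℝ} {c ε : ℝ} (hc : |c| ≤ 1) (h0 : ∫ ω, Y 0 ω ∂P = c)
    (hstep : ∀ k, |∫ ω, (∏ j ∈ Finset.range (k + 1), Y j ω) * Y (k + 1) ω ∂P
      - (∫ ω, ∏ j ∈ Finset.range (k + 1), Y j ω ∂P) * c| ≤ ε) (K : ℕ) :
    |∫ ω, ∏ j ∈ Finset.range (K + 1), Y j ω ∂P - c ^ (K + 1)| ≤ K * ε := by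
  induction K with
  | zero => simp [h0]
  | succ K ih =>
    calc |∫ ω, ∏ j ∈ Finset.range (K + 2), Y j ω ∂P - c ^ (K + 2)|
        = |(∫ ω, (∏ j ∈ Finset.range (K + 1), Y j ω) * Y (K + 1) ω ∂P
            - (∫ ω, ∏ j ∈ Finset.range (K + 1), Y j ω ∂P) * c)
          + c * (∫ ω, ∏ j ∈ Finset.range (K + 1), Y j ω ∂P - c ^ (K + 1))| := by
          simp_rw [Finset.prod_range_succ _ (K + 1)]
          ring_nf
      _ ≤ ε + 1 * (K * ε) := by
          refine (abs_add_le _ _).trans (add_le_add (hstep K) ?_)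
          rw [abs_mul]
          exact mul_le_mul hc ih (abs_nonneg _) zero_le_one
      _ = (K + 1 : ℕ) * ε := by push_cast; ring

section Blocks

variable {Ω : Type*}

lemma blockS_succ_sub_blockTail (X : ℕ → Ω → ℝ) {r l : ℕ} (hlr : l ≤ r) (k : ℕ) (ω : Ω) :
    blockS X r (k + 1) ω - blockTail X r l (k + 1) ω
      = ∑ i ∈ Finset.range (r - l), X (i + k * r) ω := by
  have hsplit := Finset.sum_range_add (fun i => X (k * r + i) ω) (r - l) l
  rw [Nat.sub_add_cancel hlr] at hsplit
  have htail : blockTail X r l (k + 1) ω = ∑ i ∈ Finset.range l, X (k * r + (r - l + i)) ω :=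
    Finset.sum_congr rfl fun i _ => congrArg (X · ω) (by rw [add_mul, one_mul]; omega)
  rw [blockS, Nat.add_sub_cancel, hsplit, htail, add_sub_cancel_right]
  exact Finset.sum_congr rfl fun i _ => by rw [add_comm]

def blockWeight (X : ℕ → Ω → ℝ) (f : ℝ → ℝ) (a : ℝ) (n s : ℕ) (ω : Ω) : ℝ :=
  Real.exp (-f ((∑ i ∈ Finset.range n, X (i + s) ω) / a))

variable {X : ℕ → Ω → ℝ} {f : ℝ → ℝ} {a : ℝ} {n s : ℕ}

lemma blockWeight_nonneg (ω : Ω) : 0 ≤ blockWeight X f a n s ω := (Real.exp_pos _).le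

lemma blockWeight_le_one (hf0 : ∀ x, 0 ≤ f x) (ω : Ω) : blockWeight X f a n s ω ≤ 1 :=
  Real.exp_le_one_iff.2 (neg_nonpos.2 (hf0 _))

lemma measurable_blockWeight {m : MeasurableSpace Ω} (hf : Measurable f)
    (hX : ∀ i < n, Measurable[m] (X (i + s))) : Measurable[m] (blockWeight X f a n s) :=
  Real.measurable_exp.comp <| (hf.comp <| (Finset.measurable_sum _ fun i hi =>
    hX i (Finset.mem_range.1 hi)).div_const a).neg

lemma exp_neg_sum_Icc_eq_prod_blockWeight (X : ℕ → Ω → ℝ) (f : ℝ → ℝ) (a : ℝ) {r l : ℕ}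
    (hlr : l ≤ r) (K : ℕ) (ω : Ω) :
    Real.exp (-∑ k ∈ Finset.Icc 1 K, f ((blockS X r k ω - blockTail X r l k ω) / a))
      = ∏ k ∈ Finset.range K, blockWeight X f a (r - l) (k * r) ω := by
  rw [← Finset.Ico_add_one_right_eq_Icc, Finset.sum_Ico_eq_sum_range, ← Finset.sum_neg_distrib,
    Real.exp_sum, Nat.add_sub_cancel]
  refine Finset.prod_congr rfl fun k _ => ?_
  rw [add_comm 1 k, blockS_succ_sub_blockTail X hlr]
  rfl

variable [MeasurableSpace Ω] {P : Measure Ω}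

lemma integral_blockWeight (hstat : IsStationarySeq P X) (hX : ∀ i, Measurable (X i))
    (hf : Measurable f) (n s : ℕ) :
    ∫ ω, blockWeight X f a n s ω ∂P = ∫ ω, Real.exp (-f (pS X n ω / a)) ∂P :=
  hstat.integral_comp_shift hX (Φ := fun y => Real.exp (-f ((∑ i ∈ Finset.range n, y i) / a)))
    (Real.measurable_exp.comp <| (hf.comp <| (Finset.measurable_sum _ fun i _ =>
      measurable_pi_apply i).div_const a).neg) s

lemma abs_integral_blockWeight_le_one [IsProbabilityMeasure P] (hf0 : ∀ x, 0 ≤ f x) :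
    |∫ ω, blockWeight X f a n s ω ∂P| ≤ 1 := by
  simpa using norm_integral_le_of_norm_le_const (μ := P) (.of_forall fun ω =>
    (Real.norm_eq_abs _).trans_le <|
      (abs_of_nonneg (blockWeight_nonneg ω)).trans_le (blockWeight_le_one hf0 ω))

theorem abs_integral_prod_blockWeight_mul_sub_le_alphaMix [IsProbabilityMeasure P]
    (hstat : IsStationarySeq P X) (hX : ∀ i, Measurable (X i)) (hf : Measurable f)
    (hf0 : ∀ x, 0 ≤ f x) {r l : ℕ} (hlr : l < r) (k : ℕ) :
    |∫ ω, (∏ j ∈ Finset.range (k + 1), blockWeight X f a (r - l) (j * r) ω)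
        * blockWeight X f a (r - l) ((k + 1) * r) ω ∂P
      - (∫ ω, ∏ j ∈ Finset.range (k + 1), blockWeight X f a (r - l) (j * r) ω ∂P)
        * ∫ ω, Real.exp (-f (pS X (r - l) ω / a)) ∂P| ≤ alphaMix P X (l + 1) := by
  rw [← integral_blockWeight hstat hX hf (r - l) ((k + 1) * r)]
  refine abs_integral_mul_sub_le_alphaMix hX (j := k * r + (r - l - 1)) ?_ ?_
    (fun ω => Finset.prod_nonneg fun j _ => blockWeight_nonneg ω)
    (fun ω => Finset.prod_le_one (fun j _ => blockWeight_nonneg ω)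
      fun j _ => blockWeight_le_one hf0 ω)
    blockWeight_nonneg (blockWeight_le_one hf0)
  · refine Finset.measurable_prod _ fun j hj => measurable_blockWeight hf fun i hi =>
      measurable_pastSigma ?_
    have := Nat.mul_le_mul_right r (Nat.lt_succ_iff.1 (Finset.mem_range.1 hj))
    omega
  · rw [show k * r + (r - l - 1) + (l + 1) = (k + 1) * r by rw [add_mul, one_mul]; omega]
    exact measurable_blockWeight hf fun i _ => measurable_futureSigma (Nat.le_add_left _ _)

end Blocks

theorem stmt14_general
    {Ω : Type*} [MeasurableSpace Ω] (P : Measure Ω) [IsProbabilityMeasure P]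
    (X : ℕ → Ω → ℝ) (hXmeas : ∀ i, Measurable (X i))
    (hstat : IsStationarySeq P X)
    (r l K : ℕ) (hlr : l < r)
    (a : ℝ)
    (f : ℝ → ℝ) (hfmeas : Measurable f) (hf0 : ∀ x, 0 ≤ f x) :
    |(∫ ω, Real.exp (- ∑ k ∈ Finset.Icc 1 K,
        f ((blockS X r k ω - blockTail X r l k ω) / a)) ∂P)
      - (∫ ω, Real.exp (- f (pS X (r - l) ω / a)) ∂P) ^ K|
      ≤ 4 * (K : ℝ) * alphaMix P X (l + 1) := by
  obtain _ | K := K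
  · simp
  simp_rw [exp_neg_sum_Icc_eq_prod_blockWeight X f a hlr.le]
  calc _ ≤ K * alphaMix P X (l + 1) :=
        abs_integral_prod_range_sub_pow_le
          (integral_blockWeight hstat hXmeas hfmeas (r - l) 0 ▸
            abs_integral_blockWeight_le_one hf0)
          (by simpa using integral_blockWeight hstat hXmeas hfmeas (a := a) (r - l) 0)
          (abs_integral_prod_blockWeight_mul_sub_le_alphaMix hstat hXmeas hfmeas hf0 hlr) K
    _ ≤ 4 * ((K + 1 : ℕ) : ℝ) * alphaMix P X (l + 1) := by
        have := alphaMix_nonneg (P := P) (X := X) (l + 1)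
        push_cast
        nlinarith

/-- For a strictly stationary sequence with α-mixing coefficients
(α_m), blocks of length r with the last l < r variables dropped, and a bounded
measurable f : ℝ → [0,∞),
|E exp(−Σ_{k=1}^{K} f(a⁻¹(S^k_{r} − S^k_{r,l}))) − (E exp(−f(a⁻¹ S_{r−l})))^K|
  ≤ 4 K α_{l+1}. -/
theorem stmt14
    {Ω : Type*} [MeasurableSpace Ω] (P : Measure Ω) [IsProbabilityMeasure P]
    (X : ℕ → Ω → ℝ) (hXmeas : ∀ i, Measurable (X i))
    (hstat : IsStationarySeq P X)
    (r l K : ℕ) (hr : 1 ≤ r) (hl : 1 ≤ l) (hK : 1 ≤ K) (hlr : l < r)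
    (a : ℝ) (ha : 0 < a)
    (f : ℝ → ℝ) (hfmeas : Measurable f) (hf0 : ∀ x, 0 ≤ f x)
    (M : ℝ) (hfM : ∀ x, f x ≤ M) :
    |(∫ ω, Real.exp (- ∑ k ∈ Finset.Icc 1 K,
        f ((blockS X r k ω - blockTail X r l k ω) / a)) ∂P)
      - (∫ ω, Real.exp (- f (pS X (r - l) ω / a)) ∂P) ^ K|
      ≤ 4 * (K : ℝ) * alphaMix P X (l + 1) :=
  stmt14_general P X hXmeas hstat r l K hlr a f hfmeas hf0
end
end
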